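/- arXiv:0909.0471 — 3 statements merged into one kernel-verified Lean document; each statement's English description precedes it below -/
import Mathlib

section
/- For d ≥ 3, in any cover of the ridges of the d-cube by d sets of ridges, at least one set contains a pair of antipodal (d-4)-faces. -/
namespace Cube

/-- A face of the `d`-cube: `none` = varying coordinate (X), `some b` = fixed at `b`. -/
abbrev Face (d : ℕ) := Fin d → Option Bool

/-- `F` is a `k`-face: exactly `k` varying coordinates. -/
def IsKFace {d : ℕ} (F : Face d) (k : ℕ) : Prop :=
  (Finset.univ.filter fun i => F i = none).card = k

/-- `G` is a subface of `F`: `G` agrees with every fixed coordinate of `F`. -/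
def Subface {d : ℕ} (G F : Face d) : Prop := ∀ i b, F i = some b → G i = some b

/-- Antipodal faces: same varying positions, opposite fixed values. -/
def Antipodal {d : ℕ} (F G : Face d) : Prop := ∀ i, G i = (F i).map (!·)

abbrev Vertex (d : ℕ) := Fin d → Bool

/-- The vertex `v` lies on the face `F`. -/
def VMem {d : ℕ} (v : Vertex d) (F : Face d) : Prop := ∀ i b, F i = some b → v i = b

/-- A set of faces contains the face `G` if `G` is a subface of one of its members. -/
def SetContains {d : ℕ} (A : Set (Face d)) (G : Face d) : Prop := ∃ F ∈ A, Subface G F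

end Cube

open Cube

/-!
Record a face by its literals `(i, b)`, meaning coordinate `i` fixed at `b`; a ridge is then an
edge joining two literals of distinct coordinates. If a set of the cover contains two ridges
without a common literal, together they fix at most four coordinates, and fixing four coordinates
in agreement with the first ridge and in disagreement with the second gives a pair of antipodal
`(d-4)`-faces in that set. Otherwise every set is an intersecting family of edges, hence a star
(at most `2(d-1)` ridges) or a triangle (at most `3`). Since there are `d · 2(d-1)` ridges, all
`d` sets are then full stars; but among the at least `d ≥ 3` literals that are not centres, two
lie in distinct coordinates, and the ridge joining them is not covered.
-/

open Finset

theorem Finset.exists_eq_pair_of_mem {α : Type*} [DecidableEq α] {s : Finset α} {a : α}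
    (hs : #s = 2) (ha : a ∈ s) : ∃ b, a ≠ b ∧ s = {a, b} := by
  obtain ⟨b, hb, hba⟩ := exists_mem_ne (s := s) (by omega) a
  refine ⟨b, hba.symm, (eq_of_subset_of_card_le ?_ ?_).symm⟩
  · simp [insert_subset_iff, ha, hb]
  · rw [hs, card_pair hba.symm]

theorem Set.Intersecting.exists_forall_mem_or_card_le_three {α : Type*} [DecidableEq α]
    {𝒜 : Finset (Finset α)} (h𝒜 : (𝒜 : Set (Finset α)).Intersecting)
    (h𝒜₂ : ∀ s ∈ 𝒜, #s = 2) : (∃ x, ∀ s ∈ 𝒜, x ∈ s) ∨ #𝒜 ≤ 3 := by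
  have meets : ∀ ⦃s t⦄, s ∈ 𝒜 → t ∈ 𝒜 → ∃ a ∈ s, a ∈ t := fun s t hs ht =>
    Finset.not_disjoint_iff.1 (h𝒜 hs ht)
  rcases 𝒜.eq_empty_or_nonempty with rfl | ⟨s, hs⟩
  · simp
  obtain ⟨x, y, hxy, rfl⟩ := card_eq_two.1 (h𝒜₂ _ hs)
  by_cases hx : ∀ t ∈ 𝒜, x ∈ t
  · exact .inl ⟨x, hx⟩
  by_cases hy : ∀ t ∈ 𝒜, y ∈ t
  · exact .inl ⟨y, hy⟩
  push Not at hx hy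
  obtain ⟨t, ht, hxt⟩ := hx
  obtain ⟨u, hu, hyu⟩ := hy
  have hyt : y ∈ t := by grind [meets hs ht]
  have hxu : x ∈ u := by grind [meets hs hu]
  obtain ⟨z, hyz, rfl⟩ := exists_eq_pair_of_mem (h𝒜₂ _ ht) hyt
  obtain ⟨w, hxw, rfl⟩ := exists_eq_pair_of_mem (h𝒜₂ _ hu) hxu
  have hzw : z = w := by grind [meets ht hu]
  subst hzw
  right
  -- every pair meeting the three sides of the triangle `{x, y}, {y, z}, {x, z}` is one of them
  have hsub : 𝒜 ⊆ ({x, y, z} : Finset α).powersetCard 2 := by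
    intro v hv
    obtain ⟨a, b, hab, rfl⟩ := card_eq_two.1 (h𝒜₂ _ hv)
    refine mem_powersetCard.2 ⟨?_, card_pair hab⟩
    grind [meets hs hv, meets ht hv, meets hu hv]
  calc #𝒜 ≤ (#({x, y, z} : Finset α)).choose 2 :=
        (Finset.card_le_card hsub).trans (card_powersetCard _ _).le
    _ ≤ (3 : ℕ).choose 2 := Nat.choose_le_choose _ card_le_three
    _ = 3 := rfl

theorem Finset.exists_fst_ne_of_two_lt_card {α : Type*} {s : Finset (α × Bool)}
    (hs : 2 < #s) : ∃ q ∈ s, ∃ q' ∈ s, q.1 ≠ q'.1 := by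
  by_contra! h
  obtain ⟨q, hq⟩ := card_pos.1 (by omega : 0 < #s)
  have hsub : s ⊆ {q.1} ×ˢ univ := fun q' hq' =>
    mem_product.2 ⟨mem_singleton.2 (h q' hq' q hq), mem_univ _⟩
  have := card_le_card hsub
  rw [card_product, card_singleton, card_univ, Fintype.card_bool] at this
  omega

namespace Cube

variable {d : ℕ}

instance (F : Face d) (k : ℕ) : Decidable (IsKFace F k) :=
  inferInstanceAs (Decidable (_ = k))

def lits (F : Face d) : Finset (Fin d × Bool) := {p | F p.1 = some p.2}

@[simp]
lemma mem_lits {F : Face d} {p : Fin d × Bool} : p ∈ lits F ↔ F p.1 = some p.2 := by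
  simp [lits]

lemma lits_injective : Function.Injective (lits (d := d)) := fun F G h =>
  funext fun i => Option.ext fun b => by simpa using congrArg ((i, b) ∈ ·) h

lemma fst_injOn_lits (F : Face d) : Set.InjOn Prod.fst (lits F : Set (Fin d × Bool)) := by
  rintro ⟨i, a⟩ ha ⟨j, b⟩ hb (rfl : i = j)
  simp only [mem_coe, mem_lits] at ha hb
  rw [ha, Option.some_inj] at hb
  rw [hb]

lemma card_lits_add_card_free (F : Face d) :
    #(lits F) + #{i | F i = none} = d := by
  have himage : (lits F).image Prod.fst = ({i | F i ≠ none} : Finset (Fin d)) := by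
    ext i
    simp [Option.ne_none_iff_exists']
  rw [← card_image_of_injOn (fst_injOn_lits F), himage, add_comm,
    card_filter_add_card_filter_not, card_univ, Fintype.card_fin]

lemma isKFace_iff_card_lits {F : Face d} {k : ℕ} (hk : k ≤ d) :
    IsKFace F k ↔ #(lits F) = d - k := by
  have := card_lits_add_card_free F
  unfold IsKFace
  omega

def ridges (d : ℕ) : Finset (Face d) := {R | IsKFace R (d - 2)}

lemma mem_ridges {R : Face d} : R ∈ ridges d ↔ IsKFace R (d - 2) := by
  simp [ridges]

lemma mem_ridges_iff_card_lits (hd : 2 ≤ d) {R : Face d} : R ∈ ridges d ↔ #(lits R) = 2 := by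
  rw [mem_ridges, isKFace_iff_card_lits (Nat.sub_le d 2), Nat.sub_sub_self hd]

def ridgeOf (p q : Fin d × Bool) : Face d :=
  fun k => if k = p.1 then some p.2 else if k = q.1 then some q.2 else none

lemma lits_ridgeOf {p q : Fin d × Bool} (h : p.1 ≠ q.1) : lits (ridgeOf p q) = {p, q} := by
  ext ⟨k, b⟩
  simp only [mem_lits, ridgeOf, mem_insert, mem_singleton, Prod.ext_iff]
  grind

lemma ridgeOf_mem_ridges {p q : Fin d × Bool} (h : p.1 ≠ q.1) : ridgeOf p q ∈ ridges d := by
  have hcard : #(lits (ridgeOf p q)) = 2 := by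
    rw [lits_ridgeOf h, card_pair (ne_of_apply_ne Prod.fst h)]
  have := card_lits_add_card_free (ridgeOf p q)
  rwa [mem_ridges_iff_card_lits (by omega)]

def star (p : Fin d × Bool) : Finset (Face d) := {R ∈ ridges d | p ∈ lits R}

lemma star_eq_image (hd : 2 ≤ d) (p : Fin d × Bool) :
    star p = ({q | q.1 ≠ p.1} : Finset (Fin d × Bool)).image (ridgeOf p) := by
  ext R
  simp only [star, mem_filter, mem_image, mem_univ, true_and]
  constructor
  · rintro ⟨hR, hp⟩
    obtain ⟨q, hpq, hRq⟩ := exists_eq_pair_of_mem ((mem_ridges_iff_card_lits hd).1 hR) hp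
    have hfst : q.1 ≠ p.1 := fun h =>
      hpq (fst_injOn_lits R (by simp [hRq]) (by simp [hRq]) h.symm)
    exact ⟨q, hfst, lits_injective (by rw [lits_ridgeOf hfst.symm, hRq])⟩
  · rintro ⟨q, hq, rfl⟩
    exact ⟨ridgeOf_mem_ridges (Ne.symm hq), by simp [lits_ridgeOf (Ne.symm hq)]⟩

lemma card_star (hd : 2 ≤ d) (p : Fin d × Bool) : #(star p) = 2 * (d - 1) := by
  have hother : ({q | q.1 ≠ p.1} : Finset (Fin d × Bool)) =
      ({p.1}ᶜ : Finset (Fin d)) ×ˢ univ := by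
    ext
    simp
  rw [star_eq_image hd, card_image_of_injOn, hother, card_product, card_compl, card_singleton,
    card_univ, Fintype.card_fin, Fintype.card_bool, mul_comm]
  intro q hq q' hq' h
  have := congrArg lits h
  simp only [coe_filter, mem_univ, true_and, Set.mem_ofPred_eq] at hq hq'
  rw [lits_ridgeOf (Ne.symm hq), lits_ridgeOf (Ne.symm hq')] at this
  have hqmem : q ∈ ({p, q'} : Finset (Fin d × Bool)) := this ▸ by simp
  simpa [show q ≠ p by rintro rfl; exact hq rfl] using hqmem

lemma card_ridges (hd : 2 ≤ d) : #(ridges d) = d * (2 * (d - 1)) := by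
  have h := card_mul_eq_card_mul (fun p R => p ∈ lits R) (s := univ) (t := ridges d)
    (fun p _ => card_star hd p) (fun R hR => by
      rw [bipartiteBelow, filter_univ_mem]
      exact (mem_ridges_iff_card_lits hd).1 hR)
  rw [card_univ, Fintype.card_prod, Fintype.card_fin, Fintype.card_bool] at h
  apply Nat.eq_of_mul_eq_mul_right two_pos
  rw [← h]
  ring

lemma exists_subset_star_or_card_le_three (hd : 2 ≤ d) {B : Finset (Face d)} (hB : B ⊆ ridges d)
    (hB' : ∀ R ∈ B, ∀ R' ∈ B, ¬Disjoint (lits R) (lits R')) :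
    (∃ p, B ⊆ star p) ∨ #B ≤ 3 := by
  have hinter : ((B.image lits : Finset _) : Set (Finset (Fin d × Bool))).Intersecting := by
    simp only [coe_image]
    rintro _ ⟨R, hR, rfl⟩ _ ⟨R', hR', rfl⟩
    exact hB' R hR R' hR'
  have hpairs : ∀ s ∈ B.image lits, #s = 2 := by
    simp only [mem_image, forall_exists_index, and_imp, forall_apply_eq_imp_iff₂]
    exact fun R hR => (mem_ridges_iff_card_lits hd).1 (hB hR)
  rw [← card_image_of_injective B lits_injective]
  refine (hinter.exists_forall_mem_or_card_le_three hpairs).imp_left fun ⟨p, hp⟩ => ⟨p, ?_⟩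
  exact fun R hR => mem_filter.2 ⟨hB hR, hp _ (mem_image_of_mem _ hR)⟩

lemma exists_ridge_disjoint_lits {s : Finset (Fin d × Bool)} (hs : #s + 3 ≤ 2 * d) :
    ∃ R ∈ ridges d, Disjoint (lits R) s := by
  have hcompl : 2 < #sᶜ := by
    rw [card_compl, Fintype.card_prod, Fintype.card_fin, Fintype.card_bool]
    omega
  obtain ⟨q, hq, q', hq', hqq'⟩ := exists_fst_ne_of_two_lt_card hcompl
  refine ⟨ridgeOf q q', ridgeOf_mem_ridges hqq', ?_⟩
  rw [lits_ridgeOf hqq', ← subset_compl_iff_disjoint_right]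
  simp [insert_subset_iff, hq, hq']

lemma exists_antipodal_subfaces {R R' : Face d} (h : Disjoint (lits R) (lits R')) {m : ℕ}
    (hm : #((lits R ∪ lits R').image Prod.fst) ≤ m) (hmd : m ≤ d) :
    ∃ P P' : Face d, IsKFace P (d - m) ∧ Antipodal P P' ∧ Subface P R ∧ Subface P' R' := by
  obtain ⟨T, hST, -, hT⟩ :=
    exists_subsuperset_card_eq (subset_univ _) hm (by simpa using hmd)
  have mem_T : ∀ {k b}, (k, b) ∈ lits R ∪ lits R' → k ∈ T := fun hkb =>
    hST (mem_image_of_mem Prod.fst hkb)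
  -- on a coordinate fixed by both faces their values differ (the literals are disjoint), so `P`
  -- can follow `R` there while its antipode follows `R'`
  let P : Face d := fun k => if k ∈ T then some ((R k).getD !((R' k).getD true)) else none
  refine ⟨P, fun k => (P k).map (!·), ?_, fun _ => rfl, ?_, ?_⟩
  · have hfree : ({k | P k = none} : Finset (Fin d)) = Tᶜ := by
      ext k
      by_cases hk : k ∈ T <;> simp [P, hk]
    rw [IsKFace, hfree, card_compl, hT, Fintype.card_fin]
  · intro k b hk
    simp [P, mem_T (mem_union_left _ (mem_lits.2 hk)), hk]
  · intro k b hk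
    simp only [P, mem_T (mem_union_right _ (mem_lits.2 hk)), if_true, Option.map_some]
    cases hRk : R k with
    | none => simp [hk]
    | some a =>
      have hab : a ≠ b := by
        rintro rfl
        exact disjoint_left.1 h (mem_lits (p := (k, a)).2 hRk) (mem_lits.2 hk)
      simpa using Bool.not_eq_iff.2 hab

lemma exists_antipodal_of_disjoint_lits {R R' : Face d} (hR : R ∈ ridges d)
    (hR' : R' ∈ ridges d) (h : Disjoint (lits R) (lits R')) :
    ∃ P P' : Face d, IsKFace P (d - 4) ∧ Antipodal P P' ∧ Subface P R ∧ Subface P' R' := by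
  have hR₂ := (isKFace_iff_card_lits (Nat.sub_le d 2)).1 (mem_ridges.1 hR)
  have hR'₂ := (isKFace_iff_card_lits (Nat.sub_le d 2)).1 (mem_ridges.1 hR')
  have hcard : #((lits R ∪ lits R').image Prod.fst) ≤ min d 4 := by
    refine le_min ((card_le_univ _).trans (Fintype.card_fin d).le) ?_
    exact card_image_le.trans ((card_union_le _ _).trans (by omega))
  -- for `d < 4` all coordinates get fixed, matching the truncation `d - 4 = 0`
  rw [show d - 4 = d - min d 4 by omega]
  exact exists_antipodal_subfaces h hcard (min_le_left _ _)

theorem not_ridges_subset_biUnion (hd : 3 ≤ d) (B : Fin d → Finset (Face d))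
    (hB : ∀ i, B i ⊆ ridges d)
    (hB' : ∀ i, ∀ R ∈ B i, ∀ R' ∈ B i, ¬Disjoint (lits R) (lits R')) :
    ¬ridges d ⊆ univ.biUnion B := by
  intro hcover
  have hle : ∀ i, #(B i) ≤ 2 * (d - 1) := fun i => by
    rcases exists_subset_star_or_card_le_three (by omega) (hB i) (hB' i) with ⟨p, hp⟩ | h3
    · exact (card_le_card hp).trans (card_star (by omega) p).le
    · omega
  -- the `d` families can only cover all `d * 2(d-1)` ridges if each of them is a full star
  have hsum : ∑ i, #(B i) = ∑ _i : Fin d, 2 * (d - 1) := by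
    refine le_antisymm (sum_le_sum fun i _ => hle i) ?_
    calc ∑ _i : Fin d, 2 * (d - 1) = #(ridges d) := by simp [card_ridges (by omega : 2 ≤ d)]
      _ ≤ #(univ.biUnion B) := card_le_card hcover
      _ ≤ ∑ i, #(B i) := card_biUnion_le
  have hstar : ∀ i, ∃ p, B i ⊆ star p := fun i =>
    (exists_subset_star_or_card_le_three (by omega) (hB i) (hB' i)).resolve_right fun h3 => by
      have := (sum_eq_sum_iff_of_le fun i _ => hle i).1 hsum i (mem_univ i)
      omega
  choose p hp using hstar
  obtain ⟨R, hR, hRp⟩ := exists_ridge_disjoint_lits (s := univ.image p)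
    (by have := card_image_le (s := univ) (f := p); rw [card_univ, Fintype.card_fin] at this; omega)
  obtain ⟨i, -, hi⟩ := mem_biUnion.1 (hcover hR)
  exact disjoint_left.1 hRp (mem_filter.1 (hp i hi)).2 (mem_image_of_mem p (mem_univ i))

end Cube

theorem medium_cubical_LSB_general (d : ℕ) (hd : 3 ≤ d) (A : Fin d → Set (Face d))
    (hcover : ∀ R : Face d, IsKFace R (d - 2) → ∃ i, R ∈ A i) :
    ∃ i, ∃ P P' : Face d, IsKFace P (d - 4) ∧ Antipodal P P' ∧
      SetContains (A i) P ∧ SetContains (A i) P' := by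
  classical
  by_contra! hfree
  refine not_ridges_subset_biUnion hd (fun i => {R ∈ ridges d | R ∈ A i})
    (fun i => filter_subset _ _) (fun i R hR R' hR' hdisj => ?_) fun R hR => ?_
  · rw [mem_filter] at hR hR'
    obtain ⟨P, P', hP, hPP', hPR, hP'R'⟩ := exists_antipodal_of_disjoint_lits hR.1 hR'.1 hdisj
    exact hfree i P P' hP hPP' ⟨R, hR.2, hPR⟩ ⟨R', hR'.2, hP'R'⟩
  · obtain ⟨i, hi⟩ := hcover R (mem_ridges.1 hR)
    exact mem_biUnion.2 ⟨i, mem_univ i, mem_filter.2 ⟨hR, hi⟩⟩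

/-- medium cubical LSB: for `d ≥ 3`, any `d`-set ridge cover of `C^d`
has a set containing a pair of antipodal `(d-4)`-faces. -/
theorem medium_cubical_LSB (d : ℕ) (hd : 3 ≤ d) (A : Fin d → Set (Face d))
    (hridges : ∀ i R, R ∈ A i → IsKFace R (d - 2))
    (hcover : ∀ R : Face d, IsKFace R (d - 2) → ∃ i, R ∈ A i) :
    ∃ i, ∃ P P' : Face d, IsKFace P (d - 4) ∧ Antipodal P P' ∧
      SetContains (A i) P ∧ SetContains (A i) P' :=
  medium_cubical_LSB_general d hd A hcover
end

section
/- If two ridges of the d-cube do not contain a pair of antipodal (d-3)-faces (peaks), then either some coordinate position is fixed by both ridges at the same value, or the two ridges have disjoint sets of fixed coordinate positions. -/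
open Cube

/-!
Suppose the ridges `R`, `R'` share a fixed position but never with the same value, so they
fix every common position with opposite values. Then `R` and the antipode of `R'` are
compatible and intersect in a face fixing the positions fixed by `R` or `R'`; since one
position is fixed by both, that is at most three positions. Any peak inside this
intersection lies in `R` and its antipode lies in `R'`.
-/

namespace Cube

variable {d : ℕ}

def varying (F : Face d) : Finset (Fin d) := Finset.univ.filter fun i => F i = none

@[simp]
theorem mem_varying {F : Face d} {i : Fin d} : i ∈ varying F ↔ F i = none := by
  simp [varying]

theorem isKFace_iff_card_varying {F : Face d} {k : ℕ} : IsKFace F k ↔ (varying F).card = k :=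
  Iff.rfl

theorem Subface.trans {F G H : Face d} (hFG : Subface F G) (hGH : Subface G H) :
    Subface F H :=
  fun i b h => hFG i b (hGH i b h)

def antipode (F : Face d) : Face d := fun i => (F i).map (!·)

theorem antipodal_antipode (F : Face d) : Antipodal F (antipode F) := fun _ => rfl

@[simp]
theorem antipode_antipode (F : Face d) : antipode (antipode F) = F := by
  funext i
  cases h : F i <;> simp [antipode, h]

@[simp]
theorem varying_antipode (F : Face d) : varying (antipode F) = varying F := by
  ext i
  simp [antipode]

theorem Subface.antipode {F G : Face d} (h : Subface F G) :
    Subface (antipode F) (antipode G) := by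
  intro i b hi
  obtain ⟨c, hc, rfl⟩ := Option.map_eq_some_iff.mp hi
  simp [Cube.antipode, h i c hc]

/-- The intersection of two faces; a subface of both when they agree wherever both are fixed. -/
def meet (F G : Face d) : Face d := fun i => (F i).or (G i)

@[simp]
theorem varying_meet (F G : Face d) : varying (meet F G) = varying F ∩ varying G := by
  ext i
  simp [meet]

theorem meet_subface_left (F G : Face d) : Subface (meet F G) F := by
  intro i b h
  simp [meet, h]

theorem meet_subface_right {F G : Face d}
    (hFG : ∀ i b c, F i = some b → G i = some c → b = c) : Subface (meet F G) G := by
  intro i c hG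
  cases hF : F i with
  | none => simp [meet, hF, hG]
  | some b => simp [meet, hF, hFG i b c hF hG]

theorem exists_subface_isKFace {Q : Face d} {k : ℕ} (hk : k ≤ (varying Q).card) :
    ∃ P, Subface P Q ∧ IsKFace P k := by
  classical
  obtain ⟨T, hTQ, hT⟩ := Finset.exists_subset_card_eq hk
  refine ⟨fun i => if i ∈ T then none else some ((Q i).getD false), ?_, ?_⟩
  · intro i b hi
    have hiT : i ∉ T := fun h => by simpa [hi] using hTQ h
    simp [hiT, hi]
  · rw [isKFace_iff_card_varying, ← hT]
    congr 1
    ext i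
    simp

theorem le_card_varying_inter_of_isKFace {R R' : Face d} (hR : IsKFace R (d - 2))
    (hR' : IsKFace R' (d - 2)) {i : Fin d} (hRi : R i ≠ none) (hR'i : R' i ≠ none) :
    d - 3 ≤ (varying R ∩ varying R').card := by
  have hunion : (varying R ∪ varying R').card < d := by
    simpa using Finset.card_lt_univ_of_notMem (s := varying R ∪ varying R') (x := i)
      (by simp [hRi, hR'i])
  have := Finset.card_inter_add_card_union (varying R) (varying R')
  rw [isKFace_iff_card_varying] at hR hR'
  omega

end Cube

/-- two ridges containing no pair of antipodal peaks either fix some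
common coordinate position at the same value, or have disjoint fixed positions. -/
theorem two_ridges_no_antipodal_peaks (d : ℕ)
    (R R' : Face d) (hR : IsKFace R (d - 2)) (hR' : IsKFace R' (d - 2))
    (hanti : ¬ ∃ P P' : Face d, IsKFace P (d - 3) ∧ Antipodal P P' ∧
      Subface P R ∧ Subface P' R') :
    (∃ i : Fin d, ∃ b : Bool, R i = some b ∧ R' i = some b) ∨
    (∀ i : Fin d, R i = none ∨ R' i = none) := by
  by_contra! ⟨hsame, i, hRi, hR'i⟩
  have hcompat : ∀ j b c, R j = some b → antipode R' j = some c → b = c := by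
    intro j b c hb hc
    obtain ⟨c', hc', rfl⟩ := Option.map_eq_some_iff.mp hc
    cases b <;> cases c' <;> simp_all
  obtain ⟨P, hPQ, hP⟩ := exists_subface_isKFace (Q := meet R (antipode R')) (k := d - 3)
    (by simpa using le_card_varying_inter_of_isKFace hR hR' hRi hR'i)
  exact hanti ⟨P, antipode P, hP, antipodal_antipode P, hPQ.trans (meet_subface_left _ _),
    by simpa using (hPQ.trans (meet_subface_right hcompat)).antipode⟩
end

section
/- If the 24 ridges of the 4-cube are covered by four sets of ridges, none of which contains a pair of antipodal edges, then each set contains exactly six ridges and is either the set of all six ridges of a single facet, or an asterisk set Ast(v) for some vertex v. -/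
/-!
A set of ridges with no antipodal edges contains no two antipodal ridges, and two of its ridges
with different fixed coordinates agree wherever both are fixed. If no coordinate takes both values
on the set, the set lies in some `Ast(v)`. Otherwise the two ridges taking both values at a
coordinate `w` are its only ridges through `w`, and they pin their other fixed coordinate `α` to a
value `b` on the whole set. Either every ridge fixes `α`, and the set lies among the six ridges of
the facet `α = b`, or some ridge misses `α` and `w`, and the same dichotomy applied to the ridges
missing `w` leaves at most five ridges. So each set has at most six ridges, with equality only for
facets and asterisks, and four sets covering the 24 ridges have six each.
-/

namespace Cube

instance {d k : ℕ} (F : Face d) : Decidable (IsKFace F k) := by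
  unfold IsKFace; infer_instance

instance {d : ℕ} (G F : Face d) : Decidable (Subface G F) := by
  unfold Subface; infer_instance

instance {d : ℕ} (v : Vertex d) (F : Face d) : Decidable (VMem v F) := by
  unfold VMem; infer_instance

def fixedCoords {d : ℕ} (F : Face d) : Finset (Fin d) := Finset.univ.filter fun i => F i ≠ none

def neg {d : ℕ} (F : Face d) : Face d := fun i => (F i).map (!·)

def facet {d : ℕ} (α : Fin d) (b : Bool) : Face d := fun i => if i = α then some b else none

def ridgesOf {d : ℕ} (F : Face d) : Set (Face d) := {R | IsKFace R 2 ∧ Subface R F}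

def asterisk {d : ℕ} (v : Vertex d) : Set (Face d) := {R | IsKFace R 2 ∧ VMem v R}

def NoAntipodalEdges {d : ℕ} (A : Set (Face d)) : Prop :=
  ¬ ∃ e e' : Face d, IsKFace e 1 ∧ Antipodal e e' ∧ SetContains A e ∧ SetContains A e'

def Coherent {d : ℕ} (A : Set (Face d)) : Prop :=
  ∀ R ∈ A, ∀ R' ∈ A, ∀ i, R i ≠ none → R' i ≠ none → R i = R' i

theorem ncard_le_of_subset_pair_union {α : Type*} [Finite α] {s t : Set α} {a b : α}
    (h : s ⊆ {a, b} ∪ t) : s.ncard ≤ t.ncard + 2 := by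
  rw [Set.insert_union, Set.singleton_union] at h
  calc s.ncard ≤ (insert a (insert b t)).ncard := Set.ncard_le_ncard h
    _ ≤ t.ncard + 2 := (Set.ncard_insert_le _ _).trans (by simpa using Set.ncard_insert_le b t)

section General

variable {d : ℕ}

theorem mem_fixedCoords {F : Face d} {i : Fin d} : i ∈ fixedCoords F ↔ F i ≠ none := by
  simp [fixedCoords]

theorem card_fixedCoords {F : Face d} {k : ℕ} (h : IsKFace F k) : (fixedCoords F).card = d - k := by
  have := Finset.card_filter_add_card_filter_not (s := Finset.univ) (fun i => F i = none)
  simp only [Finset.card_univ, Fintype.card_fin] at this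
  unfold IsKFace at h
  simp only [fixedCoords, ne_eq]
  omega

theorem eq_none_iff_of_fixedCoords_eq {F G : Face d} (h : fixedCoords F = fixedCoords G)
    (i : Fin d) : F i = none ↔ G i = none := by
  simpa [mem_fixedCoords, not_iff_not] using congrArg (i ∈ ·) h

theorem eq_of_fixedCoords_eq {F G : Face d} (h : fixedCoords F = fixedCoords G)
    (hFG : ∀ i ∈ fixedCoords F, F i = G i) : F = G := by
  funext i
  by_cases hi : F i = none
  · rw [hi, ((eq_none_iff_of_fixedCoords_eq h i).1 hi)]
  · exact hFG i (mem_fixedCoords.2 hi)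

theorem antipodal_of_fixedCoords_eq {F G : Face d} (h : fixedCoords F = fixedCoords G)
    (hFG : ∀ i ∈ fixedCoords F, F i ≠ G i) : Antipodal F G := by
  intro i
  have key : ∀ x y : Option Bool, (x = none ↔ y = none) → (x ≠ none → x ≠ y) →
      y = x.map (!·) := by decide
  exact key _ _ (eq_none_iff_of_fixedCoords_eq h i) fun hi => hFG i (mem_fixedCoords.2 hi)

theorem Antipodal.eq_neg {F G : Face d} (h : Antipodal F G) : G = neg F := funext h

theorem Subface.neg {G F : Face d} (h : Subface G F) : Subface (neg G) (neg F) := by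
  intro i b hb
  obtain ⟨c, hc, rfl⟩ := Option.map_eq_some_iff.1 hb
  simp [Cube.neg, h i c hc]

theorem subface_facet_iff {R : Face d} {α : Fin d} {b : Bool} :
    Subface R (facet α b) ↔ R α = some b := by
  refine ⟨fun h => h α b (by simp [facet]), fun h i c hc => ?_⟩
  by_cases hi : i = α
  · subst hi; simp_all [facet]
  · simp [facet, hi] at hc

theorem Coherent.exists_vMem {A : Set (Face d)} (h : Coherent A) :
    ∃ v : Vertex d, ∀ R ∈ A, VMem v R := by
  classical
  refine ⟨fun i => decide (∃ R ∈ A, R i = some true), fun R hR i b hb => ?_⟩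
  cases b
  · simp only [decide_eq_false_iff_not]
    rintro ⟨R', hR', h'⟩
    simpa [hb, h'] using h R hR R' hR' i (by simp [hb]) (by simp [h'])
  · simpa using ⟨R, hR, hb⟩

theorem exists_disagree_of_not_coherent {A : Set (Face d)} (h : ¬ Coherent A) :
    ∃ R₁ ∈ A, ∃ R₂ ∈ A, ∃ w, R₁ w ≠ none ∧ R₂ w ≠ none ∧ R₁ w ≠ R₂ w := by
  simpa [Coherent] using h

theorem NoAntipodalEdges.mono {A B : Set (Face d)} (h : NoAntipodalEdges B) (hAB : A ⊆ B) :
    NoAntipodalEdges A :=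
  fun ⟨e, e', he, hee', ⟨F, hF, heF⟩, ⟨F', hF', heF'⟩⟩ =>
    h ⟨e, e', he, hee', ⟨F, hAB hF, heF⟩, ⟨F', hAB hF', heF'⟩⟩

theorem NoAntipodalEdges.false_of_subface {A : Set (Face d)} (h : NoAntipodalEdges A)
    {R R' e : Face d} (hR : R ∈ A) (hR' : R' ∈ A) (he : IsKFace e 1)
    (heR : Subface e R) (heR' : Subface (neg e) R') : False :=
  h ⟨e, neg e, he, fun _ => rfl, ⟨R, hR, heR⟩, ⟨R', hR', heR'⟩⟩

end General

set_option maxRecDepth 10000 in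
theorem exists_edge_subface : ∀ R : Face 4, IsKFace R 2 → ∃ e, IsKFace e 1 ∧ Subface e R := by
  decide

set_option synthInstance.maxSize 1000 in
set_option maxRecDepth 10000 in
theorem exists_edge_subface_of_disagree {R R' : Face 4} (hR : IsKFace R 2) (hR' : IsKFace R' 2)
    (hne : fixedCoords R ≠ fixedCoords R') {k : Fin 4} (hk : R k ≠ none) (hk' : R' k ≠ none)
    (hkk : R k ≠ R' k) : ∃ e, IsKFace e 1 ∧ Subface e R ∧ Subface (neg e) R' := by
  -- `e` extends `R` by the opposite of `R'` on the free coordinate of `R` that `R'` fixes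
  have key : ∀ R : Face 4, IsKFace R 2 → ∀ R' : Face 4, IsKFace R' 2 →
      fixedCoords R ≠ fixedCoords R' → ∀ k, R k ≠ none → R' k ≠ none → R k ≠ R' k →
      IsKFace (fun i => (R i).or (neg R' i)) 1 ∧ Subface (neg fun i => (R i).or (neg R' i)) R' := by
    decide
  obtain ⟨he, he'⟩ := key R hR R' hR' hne k hk hk' hkk
  exact ⟨_, he, fun i b hb => by simp [hb], he'⟩

theorem ridge_fixed_of_two_free : ∀ R : Face 4, IsKFace R 2 → ∀ α w i : Fin 4, α ≠ w →
    R α = none → R w = none → i ≠ α → i ≠ w → R i ≠ none := by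
  decide

theorem isKFace_facet : ∀ (α : Fin 4) (b : Bool), IsKFace (facet α b) 3 := by
  decide

theorem ncard_ridges : {R : Face 4 | IsKFace R 2}.ncard = 24 := by
  rw [Set.ncard_eq_toFinset_card']
  decide

theorem ncard_ridgesOf_facet (α : Fin 4) (b : Bool) : (ridgesOf (facet α b)).ncard = 6 := by
  rw [ridgesOf, Set.ncard_eq_toFinset_card']
  revert α b
  decide

theorem ncard_asterisk_inter_free (v : Vertex 4) (s : Finset (Fin 4)) :
    {R : Face 4 | IsKFace R 2 ∧ VMem v R ∧ ∀ i ∈ s, R i = none}.ncard = (4 - s.card).choose 2 := by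
  rw [Set.ncard_eq_toFinset_card']
  revert v s
  decide

theorem ncard_asterisk (v : Vertex 4) : (asterisk v).ncard = 6 := by
  simpa [asterisk, Nat.choose_two_right] using ncard_asterisk_inter_free v ∅

section Ridges

variable {T : Set (Face 4)}

theorem NoAntipodalEdges.not_antipodal (hA : NoAntipodalEdges T) {R R' : Face 4}
    (hR : R ∈ T) (hR' : R' ∈ T) (h2 : IsKFace R 2) : ¬ Antipodal R R' := by
  intro h
  obtain ⟨e, he, heR⟩ := exists_edge_subface R h2
  exact hA.false_of_subface hR hR' he heR (h.eq_neg ▸ heR.neg)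

theorem NoAntipodalEdges.eq_of_fixedCoords_ne (hA : NoAntipodalEdges T) (hT : ∀ R ∈ T, IsKFace R 2)
    {R R' : Face 4} (hR : R ∈ T) (hR' : R' ∈ T) (hne : fixedCoords R ≠ fixedCoords R')
    {k : Fin 4} (hk : R k ≠ none) (hk' : R' k ≠ none) : R k = R' k := by
  by_contra hkk
  obtain ⟨e, he, heR, heR'⟩ :=
    exists_edge_subface_of_disagree (hT R hR) (hT R' hR') hne hk hk' hkk
  exact hA.false_of_subface hR hR' he heR heR'

theorem Coherent.ncard_le (hT : ∀ R ∈ T, IsKFace R 2) (hc : Coherent T) (s : Finset (Fin 4))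
    (hs : ∀ R ∈ T, ∀ i ∈ s, R i = none) : T.ncard ≤ (4 - s.card).choose 2 := by
  obtain ⟨v, hv⟩ := hc.exists_vMem
  rw [← ncard_asterisk_inter_free v s]
  exact Set.ncard_le_ncard fun R hR => ⟨hT R hR, hv R hR, hs R hR⟩

theorem Coherent.eq_asterisk (hT : ∀ R ∈ T, IsKFace R 2) (hc : Coherent T) (h6 : T.ncard = 6) :
    ∃ v, T = asterisk v := by
  obtain ⟨v, hv⟩ := hc.exists_vMem
  have hsub : T ⊆ asterisk v := fun R hR => ⟨hT R hR, hv R hR⟩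
  exact ⟨v, Set.eq_of_subset_of_ncard_le hsub (by rw [ncard_asterisk, h6])⟩

variable (hT : ∀ R ∈ T, IsKFace R 2) (hA : NoAntipodalEdges T)
include hT hA

section Disagree

variable {R₁ R₂ : Face 4} (h₁ : R₁ ∈ T) (h₂ : R₂ ∈ T) {w : Fin 4}
  (hw₁ : R₁ w ≠ none) (hw₂ : R₂ w ≠ none) (hw : R₁ w ≠ R₂ w)
include h₁ h₂ hw₁ hw₂ hw

theorem exists_fixedCoords_eq_pair_of_disagree :
    ∃ α, α ≠ w ∧ fixedCoords R₁ = {α, w} ∧ fixedCoords R₂ = {α, w} ∧ R₂ α = R₁ α := by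
  have hsupp : fixedCoords R₁ = fixedCoords R₂ := by
    by_contra hne
    exact hw (hA.eq_of_fixedCoords_ne hT h₁ h₂ hne hw₁ hw₂)
  obtain ⟨α, hα, hα₂⟩ : ∃ α ∈ fixedCoords R₁, R₁ α = R₂ α := by
    by_contra! hne
    exact hA.not_antipodal h₁ h₂ (hT R₁ h₁) (antipodal_of_fixedCoords_eq hsupp hne)
  have hαw : α ≠ w := by
    rintro rfl
    exact hw hα₂
  have hpair : fixedCoords R₁ = {α, w} := by
    refine (Finset.eq_of_subset_of_card_le ?_ ?_).symm
    · simp [Finset.insert_subset_iff, hα, mem_fixedCoords, hw₁]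
    · rw [card_fixedCoords (hT R₁ h₁), Finset.card_pair hαw]
  exact ⟨α, hαw, hpair, hsupp ▸ hpair, hα₂.symm⟩

theorem eq_or_eq_of_disagree {R : Face 4} (hR : R ∈ T) (hRw : R w ≠ none) : R = R₁ ∨ R = R₂ := by
  obtain ⟨α, -, hpair₁, hpair₂, hα₂⟩ :=
    exists_fixedCoords_eq_pair_of_disagree hT hA h₁ h₂ hw₁ hw₂ hw
  have hsuppR : fixedCoords R = {α, w} := by
    by_contra hne
    exact hw ((hA.eq_of_fixedCoords_ne hT hR h₁ (hpair₁ ▸ hne) hRw hw₁).symm.trans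
      (hA.eq_of_fixedCoords_ne hT hR h₂ (hpair₂ ▸ hne) hRw hw₂))
  have hor : ∀ x y z : Option Bool, x ≠ none → y ≠ none → z ≠ none → y ≠ z → x = y ∨ x = z := by
    decide
  have hRα : R α = R₁ α := by
    by_contra hRα
    -- `R` would disagree with one of `R₁`, `R₂` at both of their fixed coordinates
    rcases hor _ _ _ hRw hw₁ hw₂ hw with h | h
    · refine hA.not_antipodal hR h₂ (hT R hR)
        (antipodal_of_fixedCoords_eq (hsuppR.trans hpair₂.symm) ?_)
      simpa [hsuppR, hα₂, h] using ⟨hRα, hw⟩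
    · refine hA.not_antipodal hR h₁ (hT R hR)
        (antipodal_of_fixedCoords_eq (hsuppR.trans hpair₁.symm) ?_)
      simpa [hsuppR, h] using ⟨hRα, Ne.symm hw⟩
  rcases hor _ _ _ hRw hw₁ hw₂ hw with h | h
  · exact .inl (eq_of_fixedCoords_eq (hsuppR.trans hpair₁.symm) (by simp [hsuppR, hRα, h]))
  · exact .inr (eq_of_fixedCoords_eq (hsuppR.trans hpair₂.symm) (by simp [hsuppR, hRα, hα₂, h]))

theorem exists_pivot_of_disagree :
    ∃ α, α ≠ w ∧ R₁ α ≠ none ∧ R₂ α = R₁ α ∧ ∀ R ∈ T, R α ≠ none → R α = R₁ α := by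
  obtain ⟨α, hαw, hpair₁, -, hα₂⟩ :=
    exists_fixedCoords_eq_pair_of_disagree hT hA h₁ h₂ hw₁ hw₂ hw
  refine ⟨α, hαw, mem_fixedCoords.1 (by simp [hpair₁]), hα₂, fun R hR hRα => ?_⟩
  by_cases hne : fixedCoords R = fixedCoords R₁
  · have hRw : R w ≠ none := mem_fixedCoords.1 (by simp [hne, hpair₁])
    rcases eq_or_eq_of_disagree hT hA h₁ h₂ hw₁ hw₂ hw hR hRw with rfl | rfl
    exacts [rfl, hα₂]
  · exact hA.eq_of_fixedCoords_ne hT hR h₁ hne hRα (mem_fixedCoords.1 (by simp [hpair₁]))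

end Disagree

theorem ncard_le_three_of_free {w α : Fin 4} {b : Bool} (hwα : w ≠ α)
    (hw : ∀ R ∈ T, R w = none) (hα : ∀ R ∈ T, R α ≠ none → R α = some b)
    {R₃ : Face 4} (h₃ : R₃ ∈ T) (h₃α : R₃ α = none) : T.ncard ≤ 3 := by
  by_cases hc : Coherent T
  · simpa using hc.ncard_le hT {w} (by simpa using hw)
  obtain ⟨R₅, h₅, R₆, h₆, k, hk₅, hk₆, hk⟩ := exists_disagree_of_not_coherent hc
  have hkw : k ≠ w := by
    rintro rfl
    exact hk₅ (hw R₅ h₅)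
  have hkα : k ≠ α := by
    rintro rfl
    exact hk ((hα R₅ h₅ hk₅).trans (hα R₆ h₆ hk₆).symm)
  have h₃fixed : ∀ i, i ≠ α → i ≠ w → R₃ i ≠ none := fun i =>
    ridge_fixed_of_two_free R₃ (hT R₃ h₃) α w i hwα.symm h₃α (hw R₃ h₃)
  have hne : ∀ {R : Face 4}, R k = none → fixedCoords R ≠ fixedCoords R₃ := fun hRk h =>
    h₃fixed k hkα hkw ((eq_none_iff_of_fixedCoords_eq h k).1 hRk)
  have hS : Coherent {R ∈ T | R k = none} := by
    rintro R ⟨hR, hRk⟩ R' ⟨hR', hR'k⟩ i hi hi'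
    by_cases hiα : i = α
    · subst hiα
      rw [hα R hR hi, hα R' hR' hi']
    · have hiw : i ≠ w := by
        rintro rfl
        exact hi (hw R hR)
      rw [hA.eq_of_fixedCoords_ne hT hR h₃ (hne hRk) hi (h₃fixed i hiα hiw),
        hA.eq_of_fixedCoords_ne hT hR' h₃ (hne hR'k) hi' (h₃fixed i hiα hiw)]
  have hS1 : {R ∈ T | R k = none}.ncard ≤ 1 := by
    have hfree : ∀ R ∈ {R ∈ T | R k = none}, ∀ i ∈ ({w, k} : Finset (Fin 4)), R i = none := by
      simp only [Finset.mem_insert, Finset.mem_singleton]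
      rintro R ⟨hR, hRk⟩ i (rfl | rfl)
      exacts [hw R hR, hRk]
    simpa [Finset.card_pair hkw.symm] using hS.ncard_le (fun R hR => hT R hR.1) {w, k} hfree
  have hsub : T ⊆ {R₅, R₆} ∪ {R ∈ T | R k = none} := by
    intro R hR
    by_cases hRk : R k = none
    · exact .inr ⟨hR, hRk⟩
    · rcases eq_or_eq_of_disagree hT hA h₅ h₆ hk₅ hk₆ hk hR hRk with rfl | rfl <;> simp
  have := ncard_le_of_subset_pair_union hsub
  omega

theorem ncard_le_six_of_disagree {R₁ R₂ : Face 4} (h₁ : R₁ ∈ T) (h₂ : R₂ ∈ T) {w : Fin 4}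
    (hw₁ : R₁ w ≠ none) (hw₂ : R₂ w ≠ none) (hw : R₁ w ≠ R₂ w) :
    T.ncard ≤ 6 ∧ (T.ncard = 6 → ∃ F, IsKFace F 3 ∧ T = ridgesOf F) := by
  obtain ⟨α, hαw, hα₁, hα₂, hαR⟩ := exists_pivot_of_disagree hT hA h₁ h₂ hw₁ hw₂ hw
  have hwR := fun R (hR : R ∈ T) => eq_or_eq_of_disagree hT hA h₁ h₂ hw₁ hw₂ hw hR
  obtain ⟨b, hb⟩ := Option.ne_none_iff_exists'.1 hα₁
  by_cases hall : ∀ R ∈ T, R α ≠ none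
  · have hsub : T ⊆ ridgesOf (facet α b) := fun R hR =>
      ⟨hT R hR, subface_facet_iff.2 (hb ▸ hαR R hR (hall R hR))⟩
    refine ⟨(Set.ncard_le_ncard hsub).trans (ncard_ridgesOf_facet α b).le, fun h6 =>
      ⟨facet α b, isKFace_facet α b, Set.eq_of_subset_of_ncard_le hsub ?_⟩⟩
    rw [ncard_ridgesOf_facet, h6]
  push Not at hall
  obtain ⟨R₃, h₃, h₃α⟩ := hall
  have h₃w : R₃ w = none := by
    by_contra h
    rcases hwR R₃ h₃ h with rfl | rfl
    exacts [hα₁ h₃α, hα₁ (hα₂ ▸ h₃α)]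
  have hS : {R ∈ T | R w = none}.ncard ≤ 3 :=
    ncard_le_three_of_free (fun R hR => hT R hR.1) (hA.mono fun R hR => hR.1) hαw.symm
      (fun R hR => hR.2) (fun R hR hRα => hb ▸ hαR R hR.1 hRα) ⟨h₃, h₃w⟩ h₃α
  have hsub : T ⊆ {R₁, R₂} ∪ {R ∈ T | R w = none} := by
    intro R hR
    by_cases hRw : R w = none
    · exact .inr ⟨hR, hRw⟩
    · rcases hwR R hR hRw with rfl | rfl <;> simp
  have := ncard_le_of_subset_pair_union hsub
  omega

theorem ncard_le_six :
    T.ncard ≤ 6 ∧ (T.ncard = 6 → (∃ F, IsKFace F 3 ∧ T = ridgesOf F) ∨ ∃ v, T = asterisk v) := by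
  by_cases hc : Coherent T
  · refine ⟨?_, fun h6 => .inr (hc.eq_asterisk hT h6)⟩
    simpa [Nat.choose_two_right] using hc.ncard_le hT ∅ (by simp)
  · obtain ⟨R₁, h₁, R₂, h₂, w, hw₁, hw₂, hw⟩ := exists_disagree_of_not_coherent hc
    obtain ⟨hle, heq⟩ := ncard_le_six_of_disagree hT hA h₁ h₂ hw₁ hw₂ hw
    exact ⟨hle, fun h6 => .inl (heq h6)⟩

end Ridges

end Cube

open Cube

/-- in a 4-set ridge cover of `C^4` with no set containing antipodal
edges, every set has exactly six ridges and is the set of ridges of a facet or an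
asterisk set. -/
theorem six_ridges_per_set (A : Fin 4 → Set (Face 4))
    (hridges : ∀ i R, R ∈ A i → IsKFace R 2)
    (hcover : ∀ R : Face 4, IsKFace R 2 → ∃ i, R ∈ A i)
    (hanti : ∀ i, ¬ ∃ e e' : Face 4, IsKFace e 1 ∧ Antipodal e e' ∧
      SetContains (A i) e ∧ SetContains (A i) e') :
    ∀ i, (A i).ncard = 6 ∧
      ((∃ F : Face 4, IsKFace F 3 ∧ A i = {R | IsKFace R 2 ∧ Subface R F}) ∨
       (∃ v : Vertex 4, A i = {R | IsKFace R 2 ∧ VMem v R})) := by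
  have hbound := fun i => ncard_le_six (hridges i) (hanti i)
  have hcov : 24 ≤ ∑ i, (A i).ncard := by
    calc 24 = {R : Face 4 | IsKFace R 2}.ncard := ncard_ridges.symm
      _ ≤ (⋃ i ∈ Finset.univ, A i).ncard :=
        Set.ncard_le_ncard fun R hR => by simpa using hcover R hR
      _ ≤ ∑ i, (A i).ncard := Finset.set_ncard_biUnion_le _ _
  intro i
  have h6 : (A i).ncard = 6 := by
    by_contra hne
    have hlt : ∑ j, (A j).ncard < ∑ _j : Fin 4, 6 :=
      Finset.sum_lt_sum (fun j _ => (hbound j).1)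
        ⟨i, Finset.mem_univ i, lt_of_le_of_ne (hbound i).1 hne⟩
    rw [Finset.sum_const, Finset.card_univ, Fintype.card_fin, smul_eq_mul] at hlt
    omega
  exact ⟨h6, (hbound i).2 h6⟩
end
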